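/- arXiv:2404.04355 — 2 statements merged into one kernel-verified Lean document; each statement's English description precedes it below -/
import Mathlib

section
/- Let J : ℝ^p → ℝ be L-smooth (L > 0) with J* := inf J > −∞, let M_Φ ≥ 0, ε̄' > 0, θ ≥ 1/3, and let (ε_k)_{k≥0} be vectors in ℝ^p with ‖ε_k‖ ≤ M_Φ ε̄'/(k+1)^θ for all k. Define the deterministic inexact gradient iteration w_{k+1} = w_k − η (∇J(w_k) − ε_k) with η = 1/(4L) from an arbitrary w_0 ∈ ℝ^p. Then for every positive integer T, (1/T) Σ_{k=0}^{T−1} ‖∇J(w_k)‖² ≤ 16 L (J(w_0) − J*)/T + 9 M_Φ² ε̄'² / T^{2/3}. -/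
/-!
With `η = 1/(4L)`, the descent lemma for the `L`-smooth `J`, combined with
`⟪g, e⟫ ≤ ‖g‖²/4 + ‖e‖²` and `‖g - e‖² ≤ 2‖g‖² + 2‖e‖²`, gives the per-step decrease
`J(w_{k+1}) ≤ J(w_k) - (η/2)‖∇J(w_k)‖² + (5η/4)‖ε_k‖²`. Telescoping bounds `∑_{k<T} ‖∇J(w_k)‖²`
by `8L(J(w_0) - J*) + (5/2) ∑_{k<T} ‖ε_k‖²`. Since `θ ≥ 1/3`, `‖ε_k‖² ≤ M_Φ² ε̄'² (k+1)^{-2/3}`,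
and each such term is at most three times the increment of `t ↦ t^{1/3}` on `[k, k+1]`
(weighted AM-GM), so the error sum is at most `3 M_Φ² ε̄'² T^{1/3}`.
-/

open Finset
open scoped RealInnerProductSpace

section Smooth

variable {E : Type*} [NormedAddCommGroup E] [InnerProductSpace ℝ E] [CompleteSpace E]
  {J : E → ℝ} {K : NNReal}

theorem hasDerivAt_apply_add_smul (hJ : Differentiable ℝ J) (x v : E) (t : ℝ) :
    HasDerivAt (fun s : ℝ => J (x + s • v)) ⟪gradient J (x + t • v), v⟫ t := by
  have hline : HasDerivAt (fun s : ℝ => x + s • v) v t := by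
    simpa using ((hasDerivAt_id t).smul_const v).const_add x
  simpa [Function.comp_def] using
    (hJ (x + t • v)).hasGradientAt.hasFDerivAt.comp_hasDerivAt t hline

theorem inner_gradient_add_smul_le (hK : LipschitzWith K (gradient J)) (x v : E) {t : ℝ}
    (ht : 0 ≤ t) :
    ⟪gradient J (x + t • v), v⟫ ≤ ⟪gradient J x, v⟫ + K * t * ‖v‖ ^ 2 := by
  have hdist : ‖gradient J (x + t • v) - gradient J x‖ ≤ K * (t * ‖v‖) := by
    simpa [dist_eq_norm, norm_smul, abs_of_nonneg ht] using hK.dist_le_mul (x + t • v) x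
  calc ⟪gradient J (x + t • v), v⟫
      = ⟪gradient J x, v⟫ + ⟪gradient J (x + t • v) - gradient J x, v⟫ := by
        rw [inner_sub_left]; ring
    _ ≤ ⟪gradient J x, v⟫ + ‖gradient J (x + t • v) - gradient J x‖ * ‖v‖ := by
        gcongr; exact real_inner_le_norm _ _
    _ ≤ ⟪gradient J x, v⟫ + K * (t * ‖v‖) * ‖v‖ := by gcongr
    _ = ⟪gradient J x, v⟫ + K * t * ‖v‖ ^ 2 := by ring

/-- The descent lemma. -/
theorem apply_add_le_of_lipschitzWith_gradient (hJ : Differentiable ℝ J)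
    (hK : LipschitzWith K (gradient J)) (x v : E) :
    J (x + v) ≤ J x + ⟪gradient J x, v⟫ + K / 2 * ‖v‖ ^ 2 := by
  set B : ℝ → ℝ := fun t => J x + t * ⟪gradient J x, v⟫ + K / 2 * ‖v‖ ^ 2 * t ^ 2
  have hB (t : ℝ) : HasDerivAt B (⟪gradient J x, v⟫ + K * t * ‖v‖ ^ 2) t := by
    have h := (((hasDerivAt_id t).mul_const ⟪gradient J x, v⟫).const_add (J x)).add
      ((hasDerivAt_pow 2 t).const_mul (K / 2 * ‖v‖ ^ 2))
    exact h.congr_deriv (by norm_num; ring)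
  have := image_le_of_deriv_right_le_deriv_boundary (a := 0) (b := 1)
    (fun t _ => (hasDerivAt_apply_add_smul hJ x v t).continuousAt.continuousWithinAt)
    (fun t _ => (hasDerivAt_apply_add_smul hJ x v t).hasDerivWithinAt)
    (by simp [B]) (fun t _ => (hB t).continuousAt.continuousWithinAt)
    (fun t _ => (hB t).hasDerivWithinAt)
    (fun t ht => inner_gradient_add_smul_le hK x v ht.1) (Set.right_mem_Icc.2 zero_le_one)
  simpa [B] using this

theorem apply_sub_smul_gradient_sub_le (hJ : Differentiable ℝ J)
    (hK : LipschitzWith K (gradient J)) {η : ℝ} (hη : 0 ≤ η) (hKη : 4 * K * η ≤ 1) (x e : E) :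
    J (x - η • (gradient J x - e))
      ≤ J x - η / 2 * ‖gradient J x‖ ^ 2 + 5 * η / 4 * ‖e‖ ^ 2 := by
  set g := gradient J x
  have hdesc := apply_add_le_of_lipschitzWith_gradient hJ hK x (-(η • (g - e)))
  rw [← sub_eq_add_neg, inner_neg_right, inner_smul_right, inner_sub_right,
    real_inner_self_eq_norm_sq, norm_neg, norm_smul, Real.norm_of_nonneg hη, mul_pow] at hdesc
  have hcross : ⟪g, e⟫ ≤ ‖g‖ ^ 2 / 4 + ‖e‖ ^ 2 := by
    nlinarith [real_inner_le_norm g e, sq_nonneg (‖g‖ / 2 - ‖e‖)]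
  have hdiff : ‖g - e‖ ^ 2 ≤ 2 * ‖g‖ ^ 2 + 2 * ‖e‖ ^ 2 := by
    nlinarith [norm_sub_le g e, norm_nonneg (g - e), sq_nonneg (‖g‖ - ‖e‖)]
  have hstep : K / 2 * η ^ 2 * ‖g - e‖ ^ 2 ≤ η / 8 * (2 * ‖g‖ ^ 2 + 2 * ‖e‖ ^ 2) := by
    calc K / 2 * η ^ 2 * ‖g - e‖ ^ 2 ≤ K / 2 * η ^ 2 * (2 * ‖g‖ ^ 2 + 2 * ‖e‖ ^ 2) := by
          gcongr
      _ ≤ η / 8 * (2 * ‖g‖ ^ 2 + 2 * ‖e‖ ^ 2) := by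
          gcongr
          nlinarith
  nlinarith [mul_le_mul_of_nonneg_left hcross hη]

theorem sum_norm_gradient_sq_le_of_inexact_gradient_descent (hJ : Differentiable ℝ J)
    (hK : LipschitzWith K (gradient J)) {η : ℝ} (hη : 0 ≤ η) (hKη : 4 * K * η ≤ 1)
    {e w : ℕ → E} (hw : ∀ k, w (k + 1) = w k - η • (gradient J (w k) - e k)) (T : ℕ) :
    η / 2 * ∑ k ∈ range T, ‖gradient J (w k)‖ ^ 2
      ≤ J (w 0) - J (w T) + 5 * η / 4 * ∑ k ∈ range T, ‖e k‖ ^ 2 := by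
  have hstep (k : ℕ) : η / 2 * ‖gradient J (w k)‖ ^ 2
      ≤ (J (w k) - J (w (k + 1))) + 5 * η / 4 * ‖e k‖ ^ 2 := by
    have := apply_sub_smul_gradient_sub_le hJ hK hη hKη (w k) (e k)
    rw [← hw k] at this
    linarith
  have := sum_le_sum fun k (_ : k ∈ range T) => hstep k
  rwa [sum_add_distrib, sum_range_sub' (fun k => J (w k)), ← mul_sum, ← mul_sum] at this

end Smooth

theorem Real.one_sub_mul_add_one_rpow_neg_le {s x : ℝ} (hs0 : 0 ≤ s) (hs1 : s ≤ 1) (hx : 0 ≤ x) :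
    (1 - s) * (x + 1) ^ (-s) ≤ (x + 1) ^ (1 - s) - x ^ (1 - s) := by
  have hx1 : 0 < x + 1 := by linarith
  have hq : 0 < (x + 1) ^ s := Real.rpow_pos_of_pos hx1 s
  have hamgm : x ^ (1 - s) * (x + 1) ^ s ≤ (1 - s) * x + s * (x + 1) :=
    Real.geom_mean_le_arith_mean2_weighted (by linarith) hs0 hx hx1.le (by ring)
  rw [Real.rpow_neg hx1.le, Real.rpow_sub hx1, Real.rpow_one, ← sub_nonneg]
  have : (x + 1) / (x + 1) ^ s - x ^ (1 - s) - (1 - s) * ((x + 1) ^ s)⁻¹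
      = ((x + 1) - x ^ (1 - s) * (x + 1) ^ s - (1 - s)) / (x + 1) ^ s := by
    field_simp
  rw [this]
  exact div_nonneg (by linarith) hq.le

theorem Real.sum_range_add_one_rpow_neg_le {s : ℝ} (hs0 : 0 ≤ s) (hs1 : s < 1) (T : ℕ) :
    ∑ k ∈ range T, ((k : ℝ) + 1) ^ (-s) ≤ (T : ℝ) ^ (1 - s) / (1 - s) := by
  rw [le_div_iff₀ (by linarith), sum_mul]
  induction T with
  | zero => simp [Real.zero_rpow (by linarith : 1 - s ≠ 0)]
  | succ n ih =>
    rw [sum_range_succ]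
    have := Real.one_sub_mul_add_one_rpow_neg_le hs0 hs1.le (Nat.cast_nonneg n)
    push_cast
    linarith

theorem sum_range_sq_norm_le_of_norm_le_div_rpow {E : Type*} [SeminormedAddCommGroup E]
    {e : ℕ → E} {A θ s : ℝ} (hs0 : 0 ≤ s) (hs1 : s < 1) (hθ : s ≤ 2 * θ)
    (he : ∀ k : ℕ, ‖e k‖ ≤ A / ((k : ℝ) + 1) ^ θ) (T : ℕ) :
    ∑ k ∈ range T, ‖e k‖ ^ 2 ≤ A ^ 2 * ((T : ℝ) ^ (1 - s) / (1 - s)) := by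
  have hpoint (k : ℕ) : ‖e k‖ ^ 2 ≤ A ^ 2 * ((k : ℝ) + 1) ^ (-s) := by
    have hk : (1 : ℝ) ≤ (k : ℝ) + 1 := by simp
    calc ‖e k‖ ^ 2 ≤ (A / ((k : ℝ) + 1) ^ θ) ^ 2 := by gcongr; exact he k
      _ = A ^ 2 / ((k : ℝ) + 1) ^ (θ * 2) := by
        rw [div_pow, ← Real.rpow_mul_natCast (by positivity)]; norm_num
      _ ≤ A ^ 2 / ((k : ℝ) + 1) ^ s := by
        gcongr
        linarith
      _ = A ^ 2 * ((k : ℝ) + 1) ^ (-s) := by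
        rw [Real.rpow_neg (by positivity), div_eq_mul_inv]
  calc ∑ k ∈ range T, ‖e k‖ ^ 2 ≤ A ^ 2 * ∑ k ∈ range T, ((k : ℝ) + 1) ^ (-s) := by
        rw [mul_sum]; exact sum_le_sum fun k _ => hpoint k
    _ ≤ A ^ 2 * ((T : ℝ) ^ (1 - s) / (1 - s)) := by
        gcongr; exact Real.sum_range_add_one_rpow_neg_le hs0 hs1 T

theorem model_based_fast_sensitivity_rate_general
    (p : ℕ) (J : EuclideanSpace ℝ (Fin p) → ℝ) (L : ℝ) (hL : 0 < L)
    (hdiff : Differentiable ℝ J)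
    (hlip : LipschitzWith L.toNNReal (fun x => gradient J x))
    (hbdd : BddBelow (Set.range J))
    (MΦ εbar' θ : ℝ) (hθ : (1 : ℝ) / 3 ≤ θ)
    (ε : ℕ → EuclideanSpace ℝ (Fin p))
    (hε : ∀ k : ℕ, ‖ε k‖ ≤ MΦ * εbar' / ((k : ℝ) + 1) ^ θ)
    (η : ℝ) (hη : η = 1 / (4 * L))
    (w : ℕ → EuclideanSpace ℝ (Fin p))
    (hw : ∀ k : ℕ, w (k + 1) = w k - η • (gradient J (w k) - ε k)) :
    ∀ T : ℕ, 0 < T →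
      (1 / (T : ℝ)) * ∑ k ∈ range T, ‖gradient J (w k)‖ ^ 2
        ≤ 16 * L * (J (w 0) - sInf (Set.range J)) / T
          + 9 * MΦ ^ 2 * εbar' ^ 2 / (T : ℝ) ^ ((2 : ℝ) / 3) := by
  intro T hT
  subst hη
  have hLK : (L.toNNReal : ℝ) = L := Real.coe_toNNReal L hL.le
  have hdescent := sum_norm_gradient_sq_le_of_inexact_gradient_descent hdiff hlip
    (by positivity) (by rw [hLK, mul_one_div_cancel (by positivity)]) hw T
  have herror := sum_range_sq_norm_le_of_norm_le_div_rpow (s := 2 / 3) (by norm_num)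
    (by norm_num) (by linarith) hε T
  norm_num at herror
  have hinf_le (x) : sInf (Set.range J) ≤ J x := csInf_le hbdd ⟨x, rfl⟩
  have hgap : L * (J (w 0) - J (w T)) ≤ L * (J (w 0) - sInf (Set.range J)) := by
    gcongr; exact hinf_le _
  have hgap0 : 0 ≤ L * (J (w 0) - sInf (Set.range J)) :=
    mul_nonneg hL.le (sub_nonneg.2 (hinf_le _))
  have hT0 : (0 : ℝ) < T := by exact_mod_cast hT
  have hrpow : (T : ℝ) ^ ((1 : ℝ) / 3) = T / (T : ℝ) ^ ((2 : ℝ) / 3) := by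
    rw [eq_div_iff (by positivity), ← Real.rpow_add hT0]; norm_num
  have hsum : ∑ k ∈ range T, ‖gradient J (w k)‖ ^ 2
      ≤ 16 * L * (J (w 0) - sInf (Set.range J))
        + 9 * (MΦ * εbar') ^ 2 * (T : ℝ) ^ ((1 : ℝ) / 3) := by
    have : 0 ≤ (MΦ * εbar') ^ 2 * (T : ℝ) ^ ((1 : ℝ) / 3) := by positivity
    field_simp at hdescent
    linarith
  rw [one_div_mul_eq_div, div_le_iff₀ hT0]
  refine hsum.trans (le_of_eq ?_)
  rw [hrpow]
  field_simp

/-- Explicit `O(T^{-2/3})` rate of the deterministic model-based controller when the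
sensitivity error decays as `ε_{H,k} ≤ ε̄'/(k+1)^θ` with `θ ≥ 1/3`: with `η = 1/(4L)`,
`(1/T) Σ_{k<T} ‖∇J(w_k)‖² ≤ 16 L (J(w_0) - J*)/T + 9 M_Φ² ε̄'²/T^{2/3}`. -/
theorem model_based_fast_sensitivity_rate
    (p : ℕ) (hp : 0 < p) (J : EuclideanSpace ℝ (Fin p) → ℝ) (L : ℝ) (hL : 0 < L)
    (hdiff : Differentiable ℝ J)
    (hlip : LipschitzWith L.toNNReal (fun x => gradient J x))
    (hbdd : BddBelow (Set.range J))
    (MΦ εbar' θ : ℝ) (hMΦ : 0 ≤ MΦ) (hεbar' : 0 < εbar') (hθ : (1 : ℝ) / 3 ≤ θ)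
    (ε : ℕ → EuclideanSpace ℝ (Fin p))
    (hε : ∀ k : ℕ, ‖ε k‖ ≤ MΦ * εbar' / ((k : ℝ) + 1) ^ θ)
    (η : ℝ) (hη : η = 1 / (4 * L))
    (w : ℕ → EuclideanSpace ℝ (Fin p))
    (hw : ∀ k : ℕ, w (k + 1) = w k - η • (gradient J (w k) - ε k)) :
    ∀ T : ℕ, 0 < T →
      (1 / (T : ℝ)) * ∑ k ∈ range T, ‖gradient J (w k)‖ ^ 2
        ≤ 16 * L * (J (w 0) - sInf (Set.range J)) / T
          + 9 * MΦ ^ 2 * εbar' ^ 2 / (T : ℝ) ^ ((2 : ℝ) / 3) :=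
  model_based_fast_sensitivity_rate_general p J L hL hdiff hlip hbdd MΦ εbar' θ hθ ε hε η hη w hw
end

section
/- Let p be a positive integer, let f : ℝ^p → ℝ be L-smooth, let δ > 0 and w ∈ ℝ^p, and let v, v' be independent random vectors each uniformly distributed on the unit sphere S_{p−1} = {v ∈ ℝ^p : ‖v‖ = 1}. Then E[(f(w + δv) − f(w + δv'))²] ≤ (3/2) L² δ⁴ + 12 δ² ‖∇f(w)‖². -/
/-!
Expand both evaluations around `w` by the descent lemma: each is
`f w + δ ⟪∇f w, v⟫` up to a remainder of size at most `L δ² / 2`. The difference is then a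
remainder of size at most `L δ²` plus `δ ⟪∇f w, v - v'⟫`, which is at most `2 |δ| ‖∇f w‖`, and
`(a + b)² ≤ 3/2 a² + 3 b²` gives the bound pointwise on the sphere, hence in expectation.
-/

open MeasureTheory Metric ProbabilityTheory

/-- The uniform (normalized surface) probability measure on the unit sphere
`S_{p-1} ⊆ ℝ^p`, viewed as a measure on the ambient space. -/
noncomputable def sphereUniform (p : ℕ) : Measure (EuclideanSpace ℝ (Fin p)) :=
  ((volume : Measure (EuclideanSpace ℝ (Fin p))).toSphere Set.univ)⁻¹ •
    Measure.map Subtype.val (volume : Measure (EuclideanSpace ℝ (Fin p))).toSphere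

open scoped NNReal InnerProductSpace

section LipschitzGradient

variable {E : Type*} [NormedAddCommGroup E] [InnerProductSpace ℝ E] [CompleteSpace E]
  {f : E → ℝ} {K : ℝ≥0}

theorem hasDerivAt_comp_add_smul (hf : Differentiable ℝ f) (x u : E) (t : ℝ) :
    HasDerivAt (fun t : ℝ => f (x + t • u)) ⟪gradient f (x + t • u), u⟫_ℝ t := by
  have hline : HasDerivAt (fun t : ℝ => x + t • u) u t := by
    simpa using ((hasDerivAt_id t).smul_const u).const_add x
  have h := (hf _).hasGradientAt.hasFDerivAt.comp_hasDerivAt t hline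
  rw [InnerProductSpace.toDual_apply_apply] at h
  exact h

theorem abs_sub_sub_inner_gradient_le (hf : Differentiable ℝ f)
    (hK : LipschitzWith K (gradient f)) (x u : E) :
    |f (x + u) - f x - ⟪gradient f x, u⟫_ℝ| ≤ K / 2 * ‖u‖ ^ 2 := by
  have hderiv (t : ℝ) : HasDerivAt (fun t : ℝ => f (x + t • u) - f x - t * ⟪gradient f x, u⟫_ℝ)
      ⟪gradient f (x + t • u) - gradient f x, u⟫_ℝ t := by
    rw [inner_sub_left]
    exact ((hasDerivAt_comp_add_smul hf x u t).sub_const (f x)).sub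
      (hasDerivAt_mul_const ⟪gradient f x, u⟫_ℝ)
  have hbound (t : ℝ) (ht : 0 ≤ t) :
      ‖⟪gradient f (x + t • u) - gradient f x, u⟫_ℝ‖ ≤ K * t * ‖u‖ ^ 2 :=
    calc ‖⟪gradient f (x + t • u) - gradient f x, u⟫_ℝ‖
        ≤ ‖gradient f (x + t • u) - gradient f x‖ * ‖u‖ := norm_inner_le_norm _ _
      _ ≤ K * ‖t • u‖ * ‖u‖ := by
        gcongr
        simpa [dist_eq_norm] using hK.dist_le_mul (x + t • u) x
      _ = K * t * ‖u‖ ^ 2 := by rw [norm_smul, Real.norm_of_nonneg ht]; ring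
  -- The remainder along `t ↦ x + t • u` has derivative bounded by `K t ‖u‖²`, so it is fenced
  -- by `K t² ‖u‖² / 2` on `[0, 1]`.
  have hfence := image_norm_le_of_norm_deriv_right_le_deriv_boundary (a := 0) (b := 1)
    (B := fun t => K / 2 * t ^ 2 * ‖u‖ ^ 2) (B' := fun t => K * t * ‖u‖ ^ 2)
    (fun t _ => (hderiv t).continuousAt.continuousWithinAt) (fun t _ => (hderiv t).hasDerivWithinAt)
    (by simp) (fun t =>
      (((hasDerivAt_pow 2 t).const_mul (K / 2 : ℝ)).mul_const (‖u‖ ^ 2)).congr_deriv (by ring))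
    (fun t ht => hbound t ht.1) ⟨zero_le_one, le_rfl⟩
  simpa using hfence

theorem sq_sub_le_of_lipschitzWith_gradient (hf : Differentiable ℝ f)
    (hK : LipschitzWith K (gradient f)) (w : E) (δ : ℝ) {x y : E} (hx : ‖x‖ ≤ 1) (hy : ‖y‖ ≤ 1) :
    (f (w + δ • x) - f (w + δ • y)) ^ 2
      ≤ 3 / 2 * K ^ 2 * δ ^ 4 + 12 * δ ^ 2 * ‖gradient f w‖ ^ 2 := by
  set g := gradient f w
  have hrem {z : E} (hz : ‖z‖ ≤ 1) : |f (w + δ • z) - f w - ⟪g, δ • z⟫_ℝ| ≤ K / 2 * δ ^ 2 := by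
    refine (abs_sub_sub_inner_gradient_le hf hK w (δ • z)).trans ?_
    rw [norm_smul, mul_pow, Real.norm_eq_abs, sq_abs]
    gcongr
    exact mul_le_of_le_one_right (sq_nonneg δ) (pow_le_one₀ (norm_nonneg z) hz)
  set a := (f (w + δ • x) - f w - ⟪g, δ • x⟫_ℝ) - (f (w + δ • y) - f w - ⟪g, δ • y⟫_ℝ)
  set b := ⟪g, δ • (x - y)⟫_ℝ
  have ha : |a| ≤ K * δ ^ 2 := by
    linarith [abs_sub (f (w + δ • x) - f w - ⟪g, δ • x⟫_ℝ) (f (w + δ • y) - f w - ⟪g, δ • y⟫_ℝ),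
      hrem hx, hrem hy]
  have hb : |b| ≤ 2 * |δ| * ‖g‖ :=
    calc |b| ≤ ‖g‖ * ‖δ • (x - y)‖ := abs_real_inner_le_norm _ _
      _ = |δ| * ‖x - y‖ * ‖g‖ := by rw [norm_smul, Real.norm_eq_abs]; ring
      _ ≤ |δ| * 2 * ‖g‖ := by gcongr; linarith [norm_sub_le x y]
      _ = 2 * |δ| * ‖g‖ := by ring
  calc (f (w + δ • x) - f (w + δ • y)) ^ 2 = (a + b) ^ 2 := by
        simp only [a, b, smul_sub, inner_sub_right]; ring
    -- Young's inequality `2ab ≤ a² / 2 + 2b²`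
    _ ≤ 3 / 2 * |a| ^ 2 + 3 * |b| ^ 2 := by
        rw [sq_abs, sq_abs]; nlinarith [sq_nonneg (a - 2 * b)]
    _ ≤ 3 / 2 * (K * δ ^ 2) ^ 2 + 3 * (2 * |δ| * ‖g‖) ^ 2 := by gcongr
    _ = 3 / 2 * K ^ 2 * δ ^ 4 + 12 * δ ^ 2 * ‖g‖ ^ 2 := by simp only [mul_pow, sq_abs]; ring

end LipschitzGradient

theorem ae_norm_eq_one_sphereUniform (p : ℕ) : ∀ᵐ x ∂sphereUniform p, ‖x‖ = 1 := by
  refine Measure.ae_smul_measure ?_ _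
  rw [(MeasurableEmbedding.subtype_coe isClosed_sphere.measurableSet).ae_map_iff]
  exact Filter.Eventually.of_forall fun x => norm_eq_of_mem_sphere x

theorem second_moment_perturbed_difference_general
    (p : ℕ) (f : EuclideanSpace ℝ (Fin p) → ℝ) (L : ℝ)
    (hdiff : Differentiable ℝ f)
    (hlip : LipschitzWith L.toNNReal (fun x => gradient f x))
    (δ : ℝ) (w : EuclideanSpace ℝ (Fin p))
    (Ω : Type*) [MeasurableSpace Ω] (P : Measure Ω) [IsProbabilityMeasure P]
    (v v' : Ω → EuclideanSpace ℝ (Fin p)) (hv : Measurable v) (hv' : Measurable v')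
    (hvdist : Measure.map v P = sphereUniform p)
    (hv'dist : Measure.map v' P = sphereUniform p) :
    ∫ ω, (f (w + δ • v ω) - f (w + δ • v' ω)) ^ 2 ∂P
      ≤ (3 / 2) * L ^ 2 * δ ^ 4 + 12 * δ ^ 2 * ‖gradient f w‖ ^ 2 := by
  have hunit : ∀ᵐ ω ∂P, ‖v ω‖ = 1 ∧ ‖v' ω‖ = 1 := by
    have h := ae_norm_eq_one_sphereUniform p
    exact (ae_of_ae_map hv.aemeasurable (hvdist ▸ h)).and
      (ae_of_ae_map hv'.aemeasurable (hv'dist ▸ h))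
  have hbound : ∀ᵐ ω ∂P, ‖(f (w + δ • v ω) - f (w + δ • v' ω)) ^ 2‖
      ≤ 3 / 2 * (L.toNNReal : ℝ) ^ 2 * δ ^ 4 + 12 * δ ^ 2 * ‖gradient f w‖ ^ 2 := by
    filter_upwards [hunit] with ω ⟨hvω, hv'ω⟩
    rw [Real.norm_of_nonneg (sq_nonneg _)]
    exact sq_sub_le_of_lipschitzWith_gradient hdiff hlip w δ hvω.le hv'ω.le
  have hL : (L.toNNReal : ℝ) ^ 2 ≤ L ^ 2 := by
    rw [Real.coe_toNNReal']
    rcases le_total 0 L with h | h <;> simp [h, sq_nonneg]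
  calc ∫ ω, (f (w + δ • v ω) - f (w + δ • v' ω)) ^ 2 ∂P
      ≤ ‖∫ ω, (f (w + δ • v ω) - f (w + δ • v' ω)) ^ 2 ∂P‖ := Real.le_norm_self _
    _ ≤ (3 / 2 * (L.toNNReal : ℝ) ^ 2 * δ ^ 4 + 12 * δ ^ 2 * ‖gradient f w‖ ^ 2) * P.real .univ :=
        norm_integral_le_of_norm_le_const hbound
    _ ≤ (3 / 2) * L ^ 2 * δ ^ 4 + 12 * δ ^ 2 * ‖gradient f w‖ ^ 2 := by
        rw [probReal_univ, mul_one]; gcongr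

/-- Second-moment bound on the difference of two perturbed function evaluations:
if `f` is `L`-smooth and `v, v'` are independent uniform samples from the unit sphere, then
`E[(f(w + δv) - f(w + δv'))²] ≤ (3/2) L² δ⁴ + 12 δ² ‖∇f(w)‖²`. -/
theorem second_moment_perturbed_difference
    (p : ℕ) (hp : 0 < p) (f : EuclideanSpace ℝ (Fin p) → ℝ) (L : ℝ) (hL : 0 ≤ L)
    (hdiff : Differentiable ℝ f)
    (hlip : LipschitzWith L.toNNReal (fun x => gradient f x))
    (δ : ℝ) (hδ : 0 < δ) (w : EuclideanSpace ℝ (Fin p))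
    (Ω : Type*) [MeasurableSpace Ω] (P : Measure Ω) [IsProbabilityMeasure P]
    (v v' : Ω → EuclideanSpace ℝ (Fin p)) (hv : Measurable v) (hv' : Measurable v')
    (hvdist : Measure.map v P = sphereUniform p)
    (hv'dist : Measure.map v' P = sphereUniform p)
    (hindep : IndepFun v v' P) :
    ∫ ω, (f (w + δ • v ω) - f (w + δ • v' ω)) ^ 2 ∂P
      ≤ (3 / 2) * L ^ 2 * δ ^ 4 + 12 * δ ^ 2 * ‖gradient f w‖ ^ 2 :=
  second_moment_perturbed_difference_general p f L hdiff hlip δ w Ω P v v' hv hv' hvdist hv'dist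
end
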